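/- arXiv:1903.09506 — 2 statements merged into one kernel-verified Lean document; each statement's English description precedes it below -/
import Mathlib

section
/- Let K be a shape-regular simplex in ℝ^d with diameter h_K and let w be a polynomial of degree at most k on K. Then for 1 ≤ q < ∞ one has ‖w‖_{L^q(∂K)} ≤ C h_K^{-1/q} ‖w‖_{L^q(K)}, where C depends only on d, k, q, and the shape-regularity constant. -/
open MeasureTheory

open Metric
open scoped ENNReal NNReal

/-- Evaluation of a multivariate polynomial at a point of Euclidean space. -/
noncomputable def polyEval {d : ℕ} (p : MvPolynomial (Fin d) ℝ)
    (x : EuclideanSpace ℝ (Fin d)) : ℝ :=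
  MvPolynomial.eval (fun i => x i) p

namespace DiscreteTrace
abbrev Euc (d : ℕ) := EuclideanSpace ℝ (Fin d)

def expSet (d k : ℕ) : Finset (Fin d → ℕ) :=
  Finset.filter (fun a => ∑ i, a i ≤ k) (Fintype.piFinset fun _ => Finset.range (k+1))

lemma zero_mem_expSet {d k : ℕ} : (0 : Fin d → ℕ) ∈ expSet d k := by simp [expSet]

lemma mem_expSet_of_sum_le {d k : ℕ} {a : Fin d → ℕ} (h : ∑ i, a i ≤ k) : a ∈ expSet d k := by
  refine Finset.mem_filter.mpr ⟨Fintype.mem_piFinset.mpr fun i => ?_, h⟩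
  have : a i ≤ k := le_trans (Finset.single_le_sum (fun j _ => Nat.zero_le (a j)) (Finset.mem_univ i)) h
  simpa [Nat.lt_succ_iff] using this

lemma sum_le_of_mem_expSet {d k : ℕ} {a : Fin d → ℕ} (h : a ∈ expSet d k) : ∑ i, a i ≤ k := by
  simpa [expSet] using (Finset.mem_filter.mp h).2

noncomputable def polyFun (d k : ℕ) (c : expSet d k → ℝ) (x : Euc d) : ℝ :=
  ∑ α : expSet d k, c α * ∏ i, x i ^ (α : Fin d → ℕ) i

lemma abs_coord_le_norm {d : ℕ} (x : Euc d) (i : Fin d) : |x i| ≤ ‖x‖ := by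
  rw [EuclideanSpace.norm_eq x]
  have h1 : |x i| = Real.sqrt (‖x i‖^2) := by rw [Real.sqrt_sq_eq_abs]; simp
  rw [h1]
  exact Real.sqrt_le_sqrt (Finset.single_le_sum (fun j _ => sq_nonneg ‖x j‖) (Finset.mem_univ i))

lemma continuous_coord {d : ℕ} (i : Fin d) : Continuous (fun x : Euc d => x i) :=
  (EuclideanSpace.proj i).continuous

lemma continuous_polyEval {d : ℕ} (p : MvPolynomial (Fin d) ℝ) :
    Continuous (polyEval p) := by
  unfold polyEval
  induction p using MvPolynomial.induction_on with
  | C a => simpa using continuous_const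
  | add p q hp hq => simp only [map_add]; exact hp.add hq
  | mul_X p i hp => simp only [map_mul, MvPolynomial.eval_X]; exact hp.mul (continuous_coord i)

lemma continuous_polyFun_x {d k : ℕ} (c : expSet d k → ℝ) : Continuous (polyFun d k c) := by
  unfold polyFun
  refine continuous_finset_sum _ fun α _ => Continuous.mul continuous_const ?_
  exact continuous_finset_prod _ fun i _ => (continuous_coord i).pow _

lemma continuous_polyFun_c {d k : ℕ} (x : Euc d) :
    Continuous (fun c : expSet d k → ℝ => polyFun d k c x) := by
  unfold polyFun
  exact continuous_finset_sum _ fun α _ => (continuous_apply α).mul continuous_const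

lemma eval_smul_eq_polyeval {d : ℕ} (p : MvPolynomial (Fin d) ℝ) (x : Euc d) (t : ℝ) :
    Polynomial.eval t (MvPolynomial.aeval (fun i => Polynomial.C (x i) * Polynomial.X) p)
      = polyEval p (t • x) := by
  unfold polyEval
  induction p using MvPolynomial.induction_on with
  | C a => simp
  | add p q hp hq => simp only [map_add, Polynomial.eval_add, hp, hq]
  | mul_X p i hp =>
      simp only [map_mul, MvPolynomial.aeval_X, Polynomial.eval_mul, Polynomial.eval_C,
        Polynomial.eval_X, MvPolynomial.eval_mul, MvPolynomial.eval_X, hp,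
        PiLp.smul_apply, smul_eq_mul]
      ring

lemma eq_zero_of_eval_zero_ball {d : ℕ} (p : MvPolynomial (Fin d) ℝ)
    (h : ∀ x : Euc d, ‖x‖ < 1 → polyEval p x = 0) : p = 0 := by
  have key : ∀ x : Euc d, polyEval p x = 0 := by
    intro x
    have hx1 : (0:ℝ) < ‖x‖ + 1 := by positivity
    have hroots : (MvPolynomial.aeval fun i => Polynomial.C (x i) * Polynomial.X) p = 0 := by
      apply Polynomial.eq_zero_of_infinite_isRoot
      have hsub : Set.Ioo (-(1/(‖x‖+1))) (1/(‖x‖+1)) ⊆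
          {t | Polynomial.IsRoot ((MvPolynomial.aeval fun i => Polynomial.C (x i) * Polynomial.X) p) t} := by
        intro t ht
        have habs : |t| < 1/(‖x‖+1) := abs_lt.mpr ⟨ht.1, ht.2⟩
        have hnorm : ‖t • x‖ < 1 := by
          rw [norm_smul]
          calc ‖t‖ * ‖x‖ ≤ ‖t‖ * (‖x‖ + 1) :=
                mul_le_mul_of_nonneg_left (by linarith) (norm_nonneg t)
          _ < (1/(‖x‖+1)) * (‖x‖+1) := by
              apply mul_lt_mul_of_pos_right _ hx1
              simpa [Real.norm_eq_abs] using habs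
          _ = 1 := by field_simp
        have := h (t • x) hnorm
        simpa [Polynomial.IsRoot, eval_smul_eq_polyeval] using this
      apply Set.Infinite.mono hsub
      apply Set.Ioo_infinite
      have : (0:ℝ) < 1/(‖x‖+1) := by positivity
      linarith
    have h1 := eval_smul_eq_polyeval p x 1
    rw [hroots] at h1
    simpa using h1.symm
  have : ∀ y : Fin d → ℝ, MvPolynomial.eval y p = MvPolynomial.eval y 0 := by
    intro y
    have := key ((EuclideanSpace.equiv (Fin d) ℝ).symm y)
    simpa [polyEval] using this
  exact MvPolynomial.funext this

noncomputable def pOf (d k : ℕ) (c : expSet d k → ℝ) : MvPolynomial (Fin d) ℝ :=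
  ∑ α : expSet d k, MvPolynomial.monomial (Finsupp.equivFunOnFinite.symm (α : Fin d → ℕ)) (c α)

lemma polyEval_pOf {d k : ℕ} (c : expSet d k → ℝ) (x : Euc d) :
    polyEval (pOf d k c) x = polyFun d k c x := by
  unfold polyEval pOf polyFun
  rw [map_sum]
  refine Finset.sum_congr rfl fun α _ => ?_
  rw [MvPolynomial.eval_monomial]
  congr 1
  rw [Finsupp.prod_fintype]
  · refine Finset.prod_congr rfl fun i _ => by simp
  · intro i; simp

lemma c_eq_zero_of_pOf {d k : ℕ} (c : expSet d k → ℝ) (h : pOf d k c = 0) : c = 0 := by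
  funext β
  have := congrArg (MvPolynomial.coeff (Finsupp.equivFunOnFinite.symm (β : Fin d → ℕ))) h
  rw [MvPolynomial.coeff_zero] at this
  unfold pOf at this
  rw [MvPolynomial.coeff_sum] at this
  rw [Finset.sum_eq_single β] at this
  · simpa [MvPolynomial.coeff_monomial] using this
  · intro α _ hne
    rw [MvPolynomial.coeff_monomial, if_neg]
    intro heq
    exact hne (Subtype.ext (Finsupp.equivFunOnFinite.symm.injective heq))
  · intro hβ; exact absurd (Finset.mem_univ β) hβ

lemma polyFun_eq_zero {d k : ℕ} (c : expSet d k → ℝ)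
    (h : ∀ x : Euc d, ‖x‖ < 1 → polyFun d k c x = 0) : c = 0 := by
  apply c_eq_zero_of_pOf
  apply eq_zero_of_eval_zero_ball
  intro x hx
  rw [polyEval_pOf]
  exact h x hx

lemma polyEval_eq_polyFun {d k : ℕ} (p : MvPolynomial (Fin d) ℝ) (hp : p.totalDegree ≤ k)
    (x : Euc d) :
    polyEval p x = polyFun d k (fun α => p.coeff (Finsupp.equivFunOnFinite.symm (α : Fin d → ℕ))) x := by
  unfold polyEval polyFun
  rw [MvPolynomial.eval_eq']
  have hsub : p.support ⊆ (expSet d k).image (fun a => Finsupp.equivFunOnFinite.symm a) := by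
    intro β hβ
    refine Finset.mem_image.mpr ⟨Finsupp.equivFunOnFinite β, ?_, by simp⟩
    apply mem_expSet_of_sum_le
    have h1 := MvPolynomial.le_totalDegree hβ
    have h2 : (β.sum fun _ e => e) = ∑ i, β i := Finsupp.sum_fintype _ _ (fun i => rfl)
    have h3 : ∑ i, β i ≤ p.totalDegree := by rw [← h2]; exact h1
    calc ∑ i, (Finsupp.equivFunOnFinite β) i = ∑ i, β i := by simp [Finsupp.equivFunOnFinite]
    _ ≤ k := le_trans h3 hp
  rw [Finset.sum_subset hsub (fun β _ hβ => by
    rw [MvPolynomial.notMem_support_iff.mp hβ, zero_mul])]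
  rw [Finset.sum_image (fun a _ b _ hab => Finsupp.equivFunOnFinite.symm.injective hab)]
  rw [← Finset.sum_coe_sort]
  exact Finset.sum_congr rfl fun α _ => by simp

lemma totalDegree_affine_subst {d : ℕ} (p : MvPolynomial (Fin d) ℝ) (a : Fin d → ℝ) (r : ℝ) :
    (MvPolynomial.aeval (fun i => MvPolynomial.C (a i) + MvPolynomial.C r * MvPolynomial.X i) p).totalDegree
      ≤ p.totalDegree := by
  set f : Fin d → MvPolynomial (Fin d) ℝ :=
    fun i => MvPolynomial.C (a i) + MvPolynomial.C r * MvPolynomial.X i with hf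
  have hfdeg : ∀ i, (f i).totalDegree ≤ 1 := by
    intro i
    apply le_trans (MvPolynomial.totalDegree_add _ _)
    simp only [MvPolynomial.totalDegree_C]
    apply max_le (Nat.zero_le 1)
    apply le_trans (MvPolynomial.totalDegree_mul _ _)
    simp [MvPolynomial.totalDegree_X]
  conv_lhs => rw [p.as_sum]
  rw [map_sum]
  apply le_trans (MvPolynomial.totalDegree_finset_sum _ _)
  apply Finset.sup_le
  intro β hβ
  rw [MvPolynomial.aeval_monomial]
  apply le_trans (MvPolynomial.totalDegree_mul _ _)
  have h1 : (algebraMap ℝ (MvPolynomial (Fin d) ℝ) (p.coeff β)).totalDegree = 0 :=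
    MvPolynomial.totalDegree_C _
  rw [h1, zero_add]
  have h2 : (β.prod fun i n => f i ^ n).totalDegree ≤ β.sum fun _ n => n := by
    rw [Finsupp.prod]
    apply le_trans (MvPolynomial.totalDegree_finset_prod _ _)
    rw [Finsupp.sum]
    apply Finset.sum_le_sum
    intro i _
    apply le_trans (MvPolynomial.totalDegree_pow _ _)
    calc β i * (f i).totalDegree ≤ β i * 1 := Nat.mul_le_mul_left _ (hfdeg i)
    _ = β i := Nat.mul_one _
  exact le_trans h2 (MvPolynomial.le_totalDegree hβ)

lemma polyEval_affine_subst {d : ℕ} (p : MvPolynomial (Fin d) ℝ) (a : Fin d → ℝ) (r : ℝ)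
    (y : Euc d) :
    polyEval (MvPolynomial.aeval (fun i => MvPolynomial.C (a i) + MvPolynomial.C r * MvPolynomial.X i) p) y
      = MvPolynomial.eval (fun i => a i + r * y i) p := by
  unfold polyEval
  induction p using MvPolynomial.induction_on with
  | C c => simp
  | add p q hp hq => simp only [map_add, hp, hq]
  | mul_X p i hp =>
      simp only [map_mul, MvPolynomial.aeval_X, MvPolynomial.eval_mul, MvPolynomial.eval_add,
        MvPolynomial.eval_C, MvPolynomial.eval_X, hp]

end DiscreteTrace
namespace DiscreteTrace

noncomputable def Phi (d k : ℕ) (q : ℝ) (c : expSet d k → ℝ) : ℝ :=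
  ∫ x in ball (0 : Euc d) 1, |polyFun d k c x| ^ q

lemma abs_polyFun_le {d k : ℕ} (c : expSet d k → ℝ) {R : ℝ} (hR : 1 ≤ R) {y : Euc d}
    (hy : ‖y‖ ≤ R) :
    |polyFun d k c y| ≤ (expSet d k).card * ‖c‖ * R ^ k := by
  unfold polyFun
  apply le_trans (Finset.abs_sum_le_sum_abs _ _)
  have hterm : ∀ α : expSet d k, |c α * ∏ i, y i ^ (α : Fin d → ℕ) i| ≤ ‖c‖ * R ^ k := by
    intro α
    rw [abs_mul]
    apply mul_le_mul
    · calc |c α| = ‖c α‖ := rfl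
      _ ≤ ‖c‖ := norm_le_pi_norm c α
    · rw [Finset.abs_prod]
      calc ∏ i, |y i ^ (α : Fin d → ℕ) i| = ∏ i, |y i| ^ (α : Fin d → ℕ) i := by
            refine Finset.prod_congr rfl fun i _ => abs_pow _ _
      _ ≤ ∏ i, R ^ (α : Fin d → ℕ) i := by
            refine Finset.prod_le_prod (fun i _ => by positivity) fun i _ => ?_
            exact pow_le_pow_left₀ (abs_nonneg _) (le_trans (abs_coord_le_norm y i) hy) _
      _ = R ^ (∑ i, (α : Fin d → ℕ) i) := by rw [← Finset.prod_pow_eq_pow_sum]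
      _ ≤ R ^ k := pow_le_pow_right₀ hR (sum_le_of_mem_expSet α.2)
    · exact abs_nonneg _
    · exact norm_nonneg _
  calc ∑ α : expSet d k, |c α * ∏ i, y i ^ (α : Fin d → ℕ) i|
      ≤ ∑ _α : expSet d k, ‖c‖ * R ^ k := Finset.sum_le_sum fun α _ => hterm α
  _ = (expSet d k).card * (‖c‖ * R ^ k) := by
      rw [Finset.sum_const, nsmul_eq_mul, Finset.card_univ, Fintype.card_coe]
  _ = (expSet d k).card * ‖c‖ * R ^ k := by ring

lemma polyFun_smul {d k : ℕ} (c : expSet d k → ℝ) (t : ℝ) (x : Euc d) :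
    polyFun d k (t • c) x = t * polyFun d k c x := by
  unfold polyFun
  rw [Finset.mul_sum]
  exact Finset.sum_congr rfl fun α _ => by simp [mul_assoc]

lemma continuous_abs_rpow {d k : ℕ} (c : expSet d k → ℝ) {q : ℝ} (hq : 0 < q) :
    Continuous (fun x : Euc d => |polyFun d k c x| ^ q) := by
  apply Continuous.rpow_const (continuous_polyFun_x c).abs
  exact fun x => Or.inr hq.le

lemma integrableOn_abs_rpow {d k : ℕ} (c : expSet d k → ℝ) {q : ℝ} (hq : 0 < q)
    {s : Set (Euc d)} (hs : IsCompact s) :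
    IntegrableOn (fun x : Euc d => |polyFun d k c x| ^ q) s := by
  exact (continuous_abs_rpow c hq).continuousOn.integrableOn_compact hs

lemma Phi_nonneg {d k : ℕ} {q : ℝ} (c : expSet d k → ℝ) : 0 ≤ Phi d k q c :=
  integral_nonneg fun x => Real.rpow_nonneg (abs_nonneg _) q

lemma Phi_smul {d k : ℕ} {q : ℝ} (hq : 0 < q) (c : expSet d k → ℝ) (t : ℝ) :
    Phi d k q (t • c) = |t| ^ q * Phi d k q c := by
  unfold Phi
  rw [← integral_const_mul]
  refine setIntegral_congr_fun measurableSet_ball fun x _ => ?_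
  rw [polyFun_smul, abs_mul, Real.mul_rpow (abs_nonneg _) (abs_nonneg _)]

lemma Phi_pos {d k : ℕ} {q : ℝ} (hq : 0 < q) {c : expSet d k → ℝ} (hc : c ≠ 0) :
    0 < Phi d k q c := by
  -- find a point where polyFun is nonzero
  have hex : ∃ x : Euc d, ‖x‖ < 1 ∧ polyFun d k c x ≠ 0 := by
    by_contra hno
    push_neg at hno
    exact hc (polyFun_eq_zero c fun x hx => hno x hx)
  obtain ⟨x₀, hx₀, hne⟩ := hex
  set ε := |polyFun d k c x₀| with hε
  have hεpos : 0 < ε := abs_pos.mpr hne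
  have hcont : ContinuousAt (fun x => |polyFun d k c x|) x₀ :=
    ((continuous_polyFun_x c).abs).continuousAt
  obtain ⟨δ₁, hδ₁pos, hδ₁⟩ := Metric.continuousAt_iff.mp hcont (ε/2) (by positivity)
  set δ := min δ₁ (1 - ‖x₀‖) with hδ
  have hδpos : 0 < δ := lt_min hδ₁pos (by linarith)
  have hsub : ball x₀ δ ⊆ ball (0 : Euc d) 1 := by
    intro x hx
    rw [mem_ball] at hx ⊢
    have h1 : dist x x₀ < 1 - ‖x₀‖ := lt_of_lt_of_le hx (min_le_right _ _)
    calc dist x 0 ≤ dist x x₀ + dist x₀ 0 := dist_triangle _ _ _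
    _ < (1 - ‖x₀‖) + ‖x₀‖ := by
        apply add_lt_add_of_lt_of_le h1
        simp [dist_eq_norm]
    _ = 1 := by ring
  have hlow : ∀ x ∈ ball x₀ δ, (ε/2) ^ q ≤ |polyFun d k c x| ^ q := by
    intro x hx
    apply Real.rpow_le_rpow (by positivity) _ hq.le
    have := hδ₁ (lt_of_lt_of_le (mem_ball.mp hx) (min_le_left _ _))
    have h2 : |(|polyFun d k c x|) - ε| < ε/2 := by
      simpa [Real.dist_eq, hε] using this
    have := abs_lt.mp h2
    linarith [this.1]
  have hI : IntegrableOn (fun x : Euc d => |polyFun d k c x| ^ q) (ball (0:Euc d) 1) :=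
    (integrableOn_abs_rpow c hq (isCompact_closedBall _ _)).mono_set ball_subset_closedBall
  have hstep1 : ∫ x in ball x₀ δ, |polyFun d k c x| ^ q ≤ Phi d k q c := by
    apply setIntegral_mono_set hI
    · exact Filter.Eventually.of_forall fun x => Real.rpow_nonneg (abs_nonneg _) q
    · exact HasSubset.Subset.eventuallyLE hsub
  have hstep2 : (ε/2) ^ q * (volume (ball x₀ δ)).toReal
      ≤ ∫ x in ball x₀ δ, |polyFun d k c x| ^ q := by
    apply setIntegral_ge_of_const_le_real measurableSet_ball measure_ball_lt_top.ne hlow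
    exact (integrableOn_abs_rpow c hq (isCompact_closedBall _ _)).mono_set
      ball_subset_closedBall
  have hvol : 0 < (volume (ball x₀ δ)).toReal :=
    ENNReal.toReal_pos (measure_ball_pos _ _ hδpos).ne' measure_ball_lt_top.ne
  calc (0:ℝ) < (ε/2) ^ q * (volume (ball x₀ δ)).toReal := by
        apply mul_pos (Real.rpow_pos_of_pos (by positivity) q) hvol
  _ ≤ ∫ x in ball x₀ δ, |polyFun d k c x| ^ q := hstep2
  _ ≤ Phi d k q c := hstep1

end DiscreteTrace
namespace DiscreteTrace

lemma continuous_Phi {d k : ℕ} {q : ℝ} (hq : 0 < q) : Continuous (Phi d k q) := by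
  rw [continuous_iff_continuousAt]
  intro c₀
  unfold Phi
  set B₀ : ℝ := (expSet d k).card * (‖c₀‖ + 1) with hB₀
  have hB₀nn : 0 ≤ B₀ := by positivity
  apply continuousAt_of_dominated (bound := fun _ => B₀ ^ q)
  · exact Filter.Eventually.of_forall fun c =>
      ((continuous_abs_rpow c hq).aestronglyMeasurable)
  · have hball : Metric.ball c₀ 1 ∈ nhds c₀ := Metric.ball_mem_nhds c₀ one_pos
    filter_upwards [hball] with c hc
    filter_upwards [ae_restrict_mem measurableSet_ball] with a ha
    have hnorm : ‖c‖ ≤ ‖c₀‖ + 1 := by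
      have := mem_ball_iff_norm.mp hc
      calc ‖c‖ = ‖c₀ + (c - c₀)‖ := by ring_nf
      _ ≤ ‖c₀‖ + ‖c - c₀‖ := norm_add_le _ _
      _ ≤ ‖c₀‖ + 1 := by linarith
    have habs : |polyFun d k c a| ≤ B₀ := by
      have h1 : ‖a‖ ≤ 1 := le_of_lt (mem_ball_zero_iff.mp ha)
      calc |polyFun d k c a| ≤ (expSet d k).card * ‖c‖ * 1 ^ k :=
            abs_polyFun_le c le_rfl h1
      _ = (expSet d k).card * ‖c‖ := by rw [one_pow, mul_one]
      _ ≤ B₀ := by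
          rw [hB₀]
          apply mul_le_mul_of_nonneg_left hnorm (by positivity)
    rw [Real.norm_eq_abs, abs_of_nonneg (Real.rpow_nonneg (abs_nonneg _) q)]
    exact Real.rpow_le_rpow (abs_nonneg _) habs hq.le
  · exact integrableOn_const measure_ball_lt_top.ne
  · refine Filter.Eventually.of_forall fun a => ?_
    have : Continuous fun c : expSet d k → ℝ => |polyFun d k c a| ^ q :=
      Continuous.rpow_const (continuous_polyFun_c a).abs fun _ => Or.inr hq.le
    exact this.continuousAt

lemma exists_key_bound (d k : ℕ) {q : ℝ} (hq : 0 < q) {R : ℝ} (hR : 1 ≤ R) :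
    ∃ M > 0, ∀ (c : expSet d k → ℝ) (y : Euc d), ‖y‖ ≤ R →
      |polyFun d k c y| ^ q ≤ M * Phi d k q c := by
  haveI : Nonempty (expSet d k) := ⟨⟨0, zero_mem_expSet⟩⟩
  haveI : Inhabited (expSet d k) := ⟨⟨0, zero_mem_expSet⟩⟩
  haveI : Nontrivial (expSet d k → ℝ) := Pi.nontrivial
  -- min of Phi on the unit sphere
  have hsph : IsCompact (sphere (0 : expSet d k → ℝ) 1) := isCompact_sphere _ _
  have hsphne : (sphere (0 : expSet d k → ℝ) 1).Nonempty :=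
    NormedSpace.sphere_nonempty.mpr zero_le_one
  obtain ⟨u₀, hu₀mem, hu₀min'⟩ :=
    hsph.exists_isMinOn hsphne (continuous_Phi hq).continuousOn
  have hu₀min : ∀ u ∈ sphere (0 : expSet d k → ℝ) 1, Phi d k q u₀ ≤ Phi d k q u :=
    fun u hu => hu₀min' hu
  set m := Phi d k q u₀ with hm
  have hmpos : 0 < m := by
    apply Phi_pos hq
    intro h
    rw [h] at hu₀mem
    simp only [mem_sphere_iff_norm, sub_zero, norm_zero] at hu₀mem
    exact one_ne_zero hu₀mem.symm
  set B : ℝ := (expSet d k).card * R ^ k + 1 with hB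
  have hBpos : 0 < B := by positivity
  refine ⟨B ^ q / m, div_pos (Real.rpow_pos_of_pos hBpos q) hmpos, ?_⟩
  intro c y hy
  rcases eq_or_ne c 0 with rfl | hc
  · have h0 : polyFun d k (0 : expSet d k → ℝ) y = 0 := by
      unfold polyFun; simp
    rw [h0, abs_zero, Real.zero_rpow hq.ne']
    exact mul_nonneg (le_of_lt (div_pos (Real.rpow_pos_of_pos hBpos q) hmpos)) (Phi_nonneg _)
  · set u : expSet d k → ℝ := ‖c‖⁻¹ • c with hu
    have hcnorm : 0 < ‖c‖ := norm_pos_iff.mpr hc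
    have hunorm : ‖u‖ = 1 := by
      rw [hu, norm_smul, norm_inv, norm_norm, inv_mul_cancel₀ hcnorm.ne']
    have hcu : c = ‖c‖ • u := by
      rw [hu, smul_smul, mul_inv_cancel₀ hcnorm.ne', one_smul]
    have hubound : |polyFun d k u y| ≤ B := by
      calc |polyFun d k u y| ≤ (expSet d k).card * ‖u‖ * R ^ k := abs_polyFun_le u hR hy
      _ = (expSet d k).card * R ^ k := by rw [hunorm, mul_one]
      _ ≤ B := by rw [hB]; linarith
    have humin : m ≤ Phi d k q u :=
      hu₀min u (by rw [mem_sphere_zero_iff_norm]; exact hunorm)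
    have hval : |polyFun d k c y| ^ q = ‖c‖ ^ q * |polyFun d k u y| ^ q := by
      conv_lhs => rw [hcu]
      rw [polyFun_smul, abs_mul, Real.mul_rpow (abs_nonneg _) (abs_nonneg _)]
      congr 2
      exact abs_of_nonneg (norm_nonneg _)
    have hPhi : Phi d k q c = ‖c‖ ^ q * Phi d k q u := by
      conv_lhs => rw [hcu]
      rw [Phi_smul hq, abs_of_nonneg (norm_nonneg _)]
    rw [hval, hPhi]
    have h1 : |polyFun d k u y| ^ q ≤ B ^ q :=
      Real.rpow_le_rpow (abs_nonneg _) hubound hq.le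
    have hcq : 0 < ‖c‖ ^ q := Real.rpow_pos_of_pos hcnorm q
    calc ‖c‖ ^ q * |polyFun d k u y| ^ q ≤ ‖c‖ ^ q * B ^ q :=
          mul_le_mul_of_nonneg_left h1 hcq.le
    _ = B ^ q / m * (‖c‖ ^ q * m) := by field_simp
    _ ≤ B ^ q / m * (‖c‖ ^ q * Phi d k q u) := by
        apply mul_le_mul_of_nonneg_left _ (le_of_lt (div_pos (Real.rpow_pos_of_pos hBpos q) hmpos))
        exact mul_le_mul_of_nonneg_left humin hcq.le

end DiscreteTrace
namespace DiscreteTrace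

noncomputable def faceMapL {d m : ℕ} (u : Fin (m+1) → Euc d) : (Fin m → ℝ) →ₗ[ℝ] Euc d :=
  ∑ j : Fin m, LinearMap.smulRight (LinearMap.proj j) (u j.succ - u 0)

noncomputable def faceMap {d m : ℕ} (u : Fin (m+1) → Euc d) : (Fin m → ℝ) →ᵃ[ℝ] Euc d :=
  AffineMap.mk' (fun t => u 0 + faceMapL u t) (faceMapL u) 0 (by
    intro p
    simp [vsub_eq_sub, vadd_eq_add]
    abel)

lemma faceMapL_apply {d m : ℕ} (u : Fin (m+1) → Euc d) (t : Fin m → ℝ) :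
    faceMapL u t = ∑ j : Fin m, t j • (u j.succ - u 0) := by
  unfold faceMapL
  rw [LinearMap.sum_apply]
  exact Finset.sum_congr rfl fun j _ => by simp

lemma faceMap_lipschitz {d m : ℕ} (u : Fin (m+1) → Euc d) {D : ℝ} (hD : 0 ≤ D)
    (hdist : ∀ a b, dist (u a) (u b) ≤ D) :
    LipschitzWith ((m * D : ℝ).toNNReal) (faceMap u) := by
  apply LipschitzWith.of_dist_le_mul
  intro t s
  have hco : ((((m : ℝ) * D).toNNReal : ℝ)) = (m : ℝ) * D := Real.coe_toNNReal _ (by positivity)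
  rw [hco]
  have h1 : faceMap u t = u 0 + faceMapL u t := rfl
  have h2 : faceMap u s = u 0 + faceMapL u s := rfl
  rw [dist_eq_norm, h1, h2]
  have h3 : u 0 + faceMapL u t - (u 0 + faceMapL u s) = faceMapL u (t - s) := by
    rw [map_sub]; abel
  rw [h3, faceMapL_apply]
  calc ‖∑ j : Fin m, (t - s) j • (u j.succ - u 0)‖
      ≤ ∑ j : Fin m, ‖(t - s) j • (u j.succ - u 0)‖ := norm_sum_le _ _
  _ ≤ ∑ _j : Fin m, D * dist t s := by
      refine Finset.sum_le_sum fun j _ => ?_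
      rw [norm_smul]
      have hj : ‖(t - s) j‖ ≤ dist t s := by
        have := dist_le_pi_dist t s j
        simpa [dist_eq_norm] using this
      have hu : ‖u j.succ - u 0‖ ≤ D := by
        rw [← dist_eq_norm]; exact hdist _ _
      calc ‖(t-s) j‖ * ‖u j.succ - u 0‖ ≤ dist t s * D :=
            mul_le_mul hj hu (norm_nonneg _) dist_nonneg
      _ = D * dist t s := mul_comm _ _
  _ = m * D * dist t s := by
      rw [Finset.sum_const, nsmul_eq_mul, Finset.card_univ, Fintype.card_fin]; ring

lemma convexHull_subset_faceMap_image {d m : ℕ} (u : Fin (m+1) → Euc d) :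
    convexHull ℝ (Set.range u) ⊆ faceMap u '' (Set.Icc 0 1) := by
  apply convexHull_min
  · rintro _ ⟨a, rfl⟩
    induction a using Fin.cases with
    | zero =>
        refine ⟨0, Set.mem_Icc.mpr ⟨le_refl _, fun i => zero_le_one⟩, ?_⟩
        show u 0 + faceMapL u 0 = u 0
        rw [map_zero, add_zero]
    | succ j =>
        refine ⟨Pi.single j 1, Set.mem_Icc.mpr ⟨?_, ?_⟩, ?_⟩
        · intro i
          by_cases h : i = j
          · subst h; simp
          · simp [Pi.single_eq_of_ne h]
        · intro i
          by_cases h : i = j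
          · subst h; simp
          · simp [Pi.single_eq_of_ne h]
        · show u 0 + faceMapL u (Pi.single j 1) = u j.succ
          rw [faceMapL_apply]
          rw [Finset.sum_eq_single j]
          · simp
          · intro i _ hne
            rw [Pi.single_eq_of_ne hne, zero_smul]
          · intro h; exact absurd (Finset.mem_univ j) h
  · exact (convex_Icc _ _).affine_image _

lemma hausdorff_convexHull_le {d m : ℕ} (u : Fin (m+1) → Euc d) {D : ℝ} (hD : 0 ≤ D)
    (hdist : ∀ a b, dist (u a) (u b) ≤ D) :
    μH[(m : ℝ)] (convexHull ℝ (Set.range u)) ≤ ENNReal.ofReal (m * D) ^ m := by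
  have hlip := faceMap_lipschitz u hD hdist
  calc μH[(m : ℝ)] (convexHull ℝ (Set.range u))
      ≤ μH[(m : ℝ)] (faceMap u '' (Set.Icc 0 1)) :=
        measure_mono (convexHull_subset_faceMap_image u)
  _ ≤ (((m * D : ℝ).toNNReal : ℝ≥0∞)) ^ (m : ℝ) * μH[(m : ℝ)] (Set.Icc (0 : Fin m → ℝ) 1) :=
        hlip.hausdorffMeasure_image_le (Nat.cast_nonneg m) _
  _ = ENNReal.ofReal (m * D) ^ m * 1 := by
      have hIcc : μH[(m:ℝ)] (Set.Icc (0 : Fin m → ℝ) 1) = 1 := by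
        have hcast : ((m:ℝ)) = ((Fintype.card (Fin m) : ℕ) : ℝ) := by simp
        rw [hcast, hausdorffMeasure_pi_real, Real.volume_Icc_pi]
        simp
      rw [hIcc]
      congr 1
      rw [← ENNReal.rpow_natCast (ENNReal.ofReal ((m:ℝ)*D)) m]
      rfl
  _ ≤ ENNReal.ofReal (m * D) ^ m := by rw [mul_one]

end DiscreteTrace
namespace DiscreteTrace

lemma frontier_subset_facets {m : ℕ} (v : Fin (m+2) → Euc (m+1))
    (hv : AffineIndependent ℝ v) :
    frontier (convexHull ℝ (Set.range v)) ⊆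
      ⋃ i : Fin (m+2), convexHull ℝ (Set.range (v ∘ Fin.succAbove i)) := by
  have htot : affineSpan ℝ (Set.range v) = ⊤ := by
    rw [hv.affineSpan_eq_top_iff_card_eq_finrank_add_one]
    simp [finrank_euclideanSpace_fin]
  let b : AffineBasis (Fin (m+2)) ℝ (Euc (m+1)) := ⟨v, hv, htot⟩
  have hbv : ⇑b = v := rfl
  have hK : IsClosed (convexHull ℝ (Set.range v)) :=
    ((Set.finite_range v).isCompact_convexHull ℝ).isClosed
  intro x hx
  rw [hK.frontier_eq] at hx
  obtain ⟨hxK, hxint⟩ := hx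
  have hcoord_nonneg : ∀ i, 0 ≤ b.coord i x := by
    have := b.convexHull_eq_nonneg_coord
    rw [hbv] at this
    rw [this] at hxK
    exact hxK
  have hzero : ∃ i, b.coord i x = 0 := by
    by_contra hno
    push_neg at hno
    apply hxint
    have := b.interior_convexHull
    rw [hbv] at this
    rw [this]
    exact fun i => lt_of_le_of_ne (hcoord_nonneg i) (Ne.symm (hno i))
  obtain ⟨i, hi⟩ := hzero
  refine Set.mem_iUnion.mpr ⟨i, ?_⟩
  set w : Fin (m+2) → ℝ := fun j => b.coord j x with hw
  have hsum : ∑ j, w j = 1 := b.sum_coord_apply_eq_one x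
  have hxcomb : Finset.univ.affineCombination ℝ v w = x := by
    have := b.affineCombination_coord_eq_self x
    rwa [hbv] at this
  have hcm : Finset.univ.centerMass w v = x := by
    rw [← affineCombination_eq_centerMass hsum, hxcomb]
  have hcm' : (Finset.univ.erase i).centerMass w v = x := by
    rw [Finset.centerMass_subset v (Finset.subset_univ _) ?_, hcm]
    intro j _ hj
    have : j = i := by
      by_contra hne
      exact hj (Finset.mem_erase.mpr ⟨hne, Finset.mem_univ j⟩)
    rw [this, hw]; exact hi
  rw [← hcm']
  apply Finset.centerMass_mem_convexHull
  · exact fun j _ => hcoord_nonneg j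
  · rw [Finset.sum_erase _ (by rw [hw]; exact hi), hsum]
    exact zero_lt_one
  · intro j hj
    obtain ⟨l, hl⟩ := Fin.exists_succAbove_eq (Finset.mem_erase.mp hj).1
    exact ⟨l, congrArg v hl⟩

lemma measure_frontier_le {m : ℕ} (v : Fin (m+2) → Euc (m+1))
    (hv : AffineIndependent ℝ v) {D : ℝ} (hD : 0 ≤ D)
    (hdist : ∀ a b, dist (v a) (v b) ≤ D) :
    μH[(m : ℝ)] (frontier (convexHull ℝ (Set.range v)))
      ≤ (m+2 : ℝ≥0∞) * ENNReal.ofReal (m * D) ^ m := by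
  calc μH[(m : ℝ)] (frontier (convexHull ℝ (Set.range v)))
      ≤ μH[(m : ℝ)] (⋃ i : Fin (m+2), convexHull ℝ (Set.range (v ∘ Fin.succAbove i))) :=
        measure_mono (frontier_subset_facets v hv)
  _ ≤ ∑' i : Fin (m+2), μH[(m : ℝ)] (convexHull ℝ (Set.range (v ∘ Fin.succAbove i))) :=
        measure_iUnion_le _
  _ = ∑ i : Fin (m+2), μH[(m : ℝ)] (convexHull ℝ (Set.range (v ∘ Fin.succAbove i))) :=
        tsum_fintype _
  _ ≤ ∑ _i : Fin (m+2), ENNReal.ofReal (m * D) ^ m := by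
      refine Finset.sum_le_sum fun i _ => ?_
      exact hausdorff_convexHull_le (v ∘ Fin.succAbove i) hD (fun a b => hdist _ _)
  _ = (m+2 : ℝ≥0∞) * ENNReal.ofReal (m * D) ^ m := by
      rw [Finset.sum_const, Finset.card_univ, Fintype.card_fin, nsmul_eq_mul]
      congr 1
      simp

end DiscreteTrace
namespace DiscreteTrace
open Pointwise

lemma setIntegral_ball_transform {d : ℕ} (h : Euc d → ℝ) (x₀ : Euc d) {r : ℝ} (hr : 0 < r) :
    ∫ x in ball x₀ r, h x = r ^ d * ∫ y in ball (0 : Euc d) 1, h (x₀ + r • y) := by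
  have h1 : ∫ y in ball (0 : Euc d) 1, h (x₀ + r • y)
      = (r ^ d)⁻¹ • ∫ z in r • ball (0 : Euc d) 1, h (x₀ + z) := by
    have := MeasureTheory.Measure.setIntegral_comp_smul_of_pos (volume : Measure (Euc d))
      (fun z => h (x₀ + z)) (ball (0 : Euc d) 1) hr
    rw [finrank_euclideanSpace_fin] at this
    exact this
  have h2 : r • ball (0 : Euc d) 1 = ball (0 : Euc d) r := smul_unitBall_of_pos hr
  have h3 : ∫ z in ball (0 : Euc d) r, h (x₀ + z) = ∫ x in ball x₀ r, h x := by
    have hmp : MeasurePreserving (fun z : Euc d => x₀ + z) volume volume :=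
      measurePreserving_add_left volume x₀
    have hemb : MeasurableEmbedding (fun z : Euc d => x₀ + z) :=
      (MeasurableEquiv.addLeft x₀).measurableEmbedding
    have hpre : (fun z : Euc d => x₀ + z) ⁻¹' (ball x₀ r) = ball (0 : Euc d) r := by
      ext z
      simp [mem_ball, dist_eq_norm]
    rw [← hpre]
    exact hmp.setIntegral_preimage_emb hemb _ _
  rw [h1, h2, h3, smul_eq_mul, ← mul_assoc, mul_inv_cancel₀ (by positivity), one_mul]

end DiscreteTrace

open DiscreteTrace in
/-- Discrete trace inequality on a shape-regular simplex: for a polynomial `w` of degree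
at most `k`, `‖w‖_{L^q(∂K)} ≤ C h_K^{-1/q} ‖w‖_{L^q(K)}`, with `C = C(d,k,q,γ)`. -/
theorem discrete_trace_inequality_simplex (d : ℕ) (hd : 0 < d) (k : ℕ) (q : ℝ) (hq : 1 ≤ q)
    (γ : ℝ) (hγ : 0 < γ) :
    ∃ C > 0, ∀ (v : Fin (d+1) → EuclideanSpace ℝ (Fin d)), AffineIndependent ℝ v →
      ∀ K : Set (EuclideanSpace ℝ (Fin d)), K = convexHull ℝ (Set.range v) →
      (∃ x r, 0 < r ∧ Metric.ball x r ⊆ K ∧ Metric.diam K ≤ γ * r) →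
      ∀ p : MvPolynomial (Fin d) ℝ, p.totalDegree ≤ k →
      (∫ x in frontier K, |polyEval p x| ^ q ∂(μH[(d - 1 : ℝ)])) ^ (1/q)
        ≤ C * (Metric.diam K) ^ (-(1/q)) * (∫ x in K, |polyEval p x| ^ q) ^ (1/q) := by
  obtain ⟨m, rfl⟩ : ∃ m, d = m + 1 := ⟨d - 1, (Nat.succ_pred_eq_of_pos hd).symm⟩
  have hq0 : (0:ℝ) < q := lt_of_lt_of_le one_pos hq
  have hq0' : (0:ℝ) < 1/q := by positivity
  obtain ⟨M, hM, hkey⟩ := exists_key_bound (m+1) k hq0 (le_max_right γ 1)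
  have hmm : (0:ℝ) < (m:ℝ)^m := by
    rcases Nat.eq_zero_or_pos m with hm0 | hm0
    · subst hm0; norm_num
    · positivity
  set cH : ℝ := (m+2 : ℝ) * (m:ℝ)^m with hcH
  have hcHpos : 0 < cH := mul_pos (by positivity) hmm
  set C₀ : ℝ := M * cH * γ^(m+1) with hC₀
  have hC₀pos : 0 < C₀ := mul_pos (mul_pos hM hcHpos) (by positivity)
  refine ⟨C₀ ^ (1/q), Real.rpow_pos_of_pos hC₀pos _, ?_⟩
  intro v hv K hK hshape p hp
  obtain ⟨x₀, r, hr, hball, hdiam⟩ := hshape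
  subst hK
  set K := convexHull ℝ (Set.range v) with hK
  set D := Metric.diam K with hDdef
  have hKcompact : IsCompact K := (Set.finite_range v).isCompact_convexHull ℝ
  have hKbounded := hKcompact.isBounded
  have hx₀K : x₀ ∈ K := hball (mem_ball_self hr)
  have hDnn : 0 ≤ D := Metric.diam_nonneg
  -- D > 0
  have hDpos : 0 < D := by
    set e : Euc (m+1) := EuclideanSpace.single (0 : Fin (m+1)) (1:ℝ) with he
    have hne : ‖e‖ = 1 := by rw [he, EuclideanSpace.norm_single]; simp
    have hx₁ : x₀ + (r/2) • e ∈ ball x₀ r := by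
      rw [mem_ball, dist_eq_norm]
      have : x₀ + (r/2) • e - x₀ = (r/2) • e := by abel
      rw [this, norm_smul, hne, mul_one, Real.norm_eq_abs, abs_of_pos (by linarith)]
      linarith
    have := Metric.dist_le_diam_of_mem hKbounded (hball hx₁) hx₀K
    have hdist : dist (x₀ + (r/2) • e) x₀ = r/2 := by
      rw [dist_eq_norm]
      have h1 : x₀ + (r/2) • e - x₀ = (r/2) • e := by abel
      rw [h1, norm_smul, hne, mul_one, Real.norm_eq_abs, abs_of_pos (by linarith)]
    rw [hdist] at this
    linarith
  have hγr : D ≤ γ * r := hdiam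
  -- the transformed polynomial
  set p' : MvPolynomial (Fin (m+1)) ℝ :=
    MvPolynomial.aeval (fun i => MvPolynomial.C (x₀ i) + MvPolynomial.C r * MvPolynomial.X i) p
    with hp'def
  have hp' : p'.totalDegree ≤ k := le_trans (totalDegree_affine_subst p _ r) hp
  set c : expSet (m+1) k → ℝ :=
    fun α => p'.coeff (Finsupp.equivFunOnFinite.symm (α : Fin (m+1) → ℕ)) with hcdef
  have hc : ∀ y : Euc (m+1), polyFun (m+1) k c y = polyEval p (x₀ + r • y) := by
    intro y
    rw [← polyEval_eq_polyFun p' hp' y, hp'def, polyEval_affine_subst]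
    unfold polyEval
    have harg : (fun i => x₀ i + r * y i) = (fun i => (x₀ + r • y) i) := by
      funext i
      simp
    rw [harg]
  set A : ℝ := Phi (m+1) k q c with hA
  have hAnn : 0 ≤ A := Phi_nonneg c
  set h : Euc (m+1) → ℝ := fun x => |polyEval p x| ^ q with hh
  have hhcont : Continuous h :=
    Continuous.rpow_const (continuous_polyEval p).abs fun _ => Or.inr hq0.le
  have hhnn : ∀ x, 0 ≤ h x := fun x => Real.rpow_nonneg (abs_nonneg _) q
  -- pointwise bound on the frontier
  have hfront : ∀ x ∈ frontier K, h x ≤ M * A := by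
    intro x hx
    have hxK : x ∈ K := by
      have := frontier_subset_closure (s := K) hx
      rwa [hKcompact.isClosed.closure_eq] at this
    set y : Euc (m+1) := r⁻¹ • (x - x₀) with hy
    have hxy : x₀ + r • y = x := by
      rw [hy, smul_smul, mul_inv_cancel₀ hr.ne', one_smul]
      abel
    have hynorm : ‖y‖ ≤ max γ 1 := by
      rw [hy, norm_smul, norm_inv, Real.norm_eq_abs, abs_of_pos hr]
      have h1 : ‖x - x₀‖ ≤ D := by
        rw [← dist_eq_norm]
        exact Metric.dist_le_diam_of_mem hKbounded hxK hx₀K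
      have h2 : ‖x - x₀‖ ≤ γ * r := le_trans h1 hγr
      calc r⁻¹ * ‖x - x₀‖ ≤ r⁻¹ * (γ * r) :=
            mul_le_mul_of_nonneg_left h2 (by positivity)
      _ = γ := by field_simp
      _ ≤ max γ 1 := le_max_left _ _
    have := hkey c y hynorm
    rw [hc y, hxy] at this
    exact this
  -- Hausdorff measure of the frontier
  have hdistv : ∀ a b, dist (v a) (v b) ≤ D :=
    fun a b => Metric.dist_le_diam_of_mem hKbounded
      (subset_convexHull ℝ _ (Set.mem_range_self a))
      (subset_convexHull ℝ _ (Set.mem_range_self b))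
  have hmeasbound : μH[(m:ℝ)] (frontier K) ≤ (m+2 : ℝ≥0∞) * ENNReal.ofReal (m * D) ^ m :=
    measure_frontier_le v hv hDnn hdistv
  have hfin : (m+2 : ℝ≥0∞) * ENNReal.ofReal (m * D) ^ m ≠ ⊤ := by
    apply ENNReal.mul_ne_top
    · simp
    · exact ENNReal.pow_ne_top ENNReal.ofReal_ne_top
  have hμfin : μH[(m:ℝ)] (frontier K) < ⊤ :=
    lt_of_le_of_lt hmeasbound (lt_of_le_of_ne le_top hfin)
  have hT : (μH[(m:ℝ)] (frontier K)).toReal ≤ cH * D^m := by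
    calc (μH[(m:ℝ)] (frontier K)).toReal
        ≤ ((m+2 : ℝ≥0∞) * ENNReal.ofReal (m * D) ^ m).toReal :=
          ENNReal.toReal_mono hfin hmeasbound
    _ = (m+2 : ℝ) * (m * D)^m := by
        rw [ENNReal.toReal_mul, ENNReal.toReal_pow, ENNReal.toReal_ofReal (by positivity)]
        congr 1
    _ = cH * D^m := by rw [hcH, mul_pow]; ring
  -- the measure with the stated exponent is μH[m]
  have hexp : ((m+1 : ℕ) : ℝ) - 1 = (m:ℝ) := by push_cast; ring
  -- bound the frontier integral
  have hLHS : (∫ x in frontier K, h x ∂(μH[(m:ℝ)])) ≤ (M * A) * (cH * D^m) := by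
    have hMA : 0 ≤ M * A := mul_nonneg hM.le hAnn
    have hb : ‖∫ x in frontier K, h x ∂(μH[(m:ℝ)])‖
        ≤ (M * A) * (μH[(m:ℝ)] (frontier K)).toReal := by
      apply norm_setIntegral_le_of_norm_le_const hμfin
      intro x hx
      rw [Real.norm_eq_abs, abs_of_nonneg (hhnn x)]
      exact hfront x hx
    calc (∫ x in frontier K, h x ∂(μH[(m:ℝ)]))
        ≤ ‖∫ x in frontier K, h x ∂(μH[(m:ℝ)])‖ := le_abs_self _
    _ ≤ (M * A) * (μH[(m:ℝ)] (frontier K)).toReal := hb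
    _ ≤ (M * A) * (cH * D^m) := mul_le_mul_of_nonneg_left hT hMA
  -- lower bound on the volume integral
  have hIK : r^(m+1) * A ≤ ∫ x in K, h x := by
    have htrans : ∫ x in ball x₀ r, h x = r^(m+1) * A := by
      rw [setIntegral_ball_transform h x₀ hr]
      congr 1
      rw [hA]
      unfold Phi
      refine setIntegral_congr_fun measurableSet_ball fun y _ => ?_
      rw [hh]
      simp only
      rw [hc y]
    rw [← htrans]
    apply setIntegral_mono_set
    · exact hhcont.continuousOn.integrableOn_compact hKcompact
    · exact Filter.Eventually.of_forall hhnn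
    · exact HasSubset.Subset.eventuallyLE hball
  have hIKnn : 0 ≤ ∫ x in K, h x := integral_nonneg hhnn
  set I : ℝ := ∫ x in K, h x with hI
  have hrpow : (0:ℝ) < r^(m+1) := by positivity
  have hA_le : A ≤ I / r^(m+1) := by
    rw [le_div_iff₀ hrpow]
    calc A * r^(m+1) = r^(m+1) * A := mul_comm _ _
    _ ≤ I := hIK
  have hfrac : D^m / r^(m+1) ≤ γ^(m+1) / D := by
    rw [div_le_div_iff₀ hrpow hDpos]
    calc D^m * D = D^(m+1) := by ring
    _ ≤ (γ*r)^(m+1) := pow_le_pow_left₀ hDnn hγr _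
    _ = γ^(m+1) * r^(m+1) := mul_pow _ _ _
  have hchain : (∫ x in frontier K, h x ∂(μH[(m:ℝ)])) ≤ C₀ * D⁻¹ * I := by
    calc (∫ x in frontier K, h x ∂(μH[(m:ℝ)])) ≤ (M * A) * (cH * D^m) := hLHS
    _ ≤ (M * (I / r^(m+1))) * (cH * D^m) := by
        apply mul_le_mul_of_nonneg_right _ (by positivity)
        exact mul_le_mul_of_nonneg_left hA_le hM.le
    _ = (M * cH) * (D^m / r^(m+1)) * I := by
        field_simp
        try ring
    _ ≤ (M * cH) * (γ^(m+1) / D) * I := by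
        apply mul_le_mul_of_nonneg_right _ hIKnn
        exact mul_le_mul_of_nonneg_left hfrac (by positivity)
    _ = C₀ * D⁻¹ * I := by
        rw [hC₀]
        field_simp
        try ring
  have hLHSnn : 0 ≤ ∫ x in frontier K, h x ∂(μH[(m:ℝ)]) := integral_nonneg hhnn
  -- final rpow manipulation
  have hgoal : (∫ x in frontier K, h x ∂(μH[(m:ℝ)])) ^ (1/q)
      ≤ C₀ ^ (1/q) * D ^ (-(1/q)) * I ^ (1/q) := by
    calc (∫ x in frontier K, h x ∂(μH[(m:ℝ)])) ^ (1/q)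
        ≤ (C₀ * D⁻¹ * I) ^ (1/q) := Real.rpow_le_rpow hLHSnn hchain hq0'.le
    _ = C₀ ^ (1/q) * D ^ (-(1/q)) * I ^ (1/q) := by
        rw [Real.mul_rpow (by positivity) hIKnn, Real.mul_rpow hC₀pos.le (by positivity),
          Real.inv_rpow hDnn, ← Real.rpow_neg hDnn]
  -- translate exponent
  have hmeas : (μH[((m+1 : ℕ) : ℝ) - 1] : Measure (Euc (m+1))) = μH[(m:ℝ)] := by
    rw [hexp]
  calc (∫ x in frontier K, |polyEval p x| ^ q ∂(μH[((m+1:ℕ) : ℝ) - 1])) ^ (1/q)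
      = (∫ x in frontier K, h x ∂(μH[(m:ℝ)])) ^ (1/q) := by rw [hmeas]
  _ ≤ C₀ ^ (1/q) * D ^ (-(1/q)) * I ^ (1/q) := hgoal
end

section
/- Let V, S be real Hilbert spaces with norms ⦀·⦀_V, ⦀·⦀_S. Suppose e_u^n ∈ V and e_T^n ∈ S satisfy, for all n ≥ 1: Pr ⦀e_u^n⦀² ≤ N ⦀e_u^{n−1}⦀ U ⦀e_u^n⦀ + Pr·Ra ⦀e_T^n⦀ ⦀e_u^n⦀ and κ ⦀e_T^n⦀² ≤ M ⦀e_u^{n−1}⦀ Θ ⦀e_T^n⦀, where N, M, U, Θ, Pr, Ra, κ > 0 are constants with Pr^{−1}N U + Ra κ^{−1} M Θ ≤ 1 − C₀ for some C₀ ∈ (0,1). Then ⦀e_u^n⦀ ≤ (1−C₀)^n ⦀e_u^0⦀ and ⦀e_T^n⦀ ≤ κ^{−1} M Θ (1−C₀)^{n−1} ⦀e_u^0⦀, so both sequences converge to zero. -/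
/-!
Cancelling one factor of the norm in each energy inequality gives
`⦀e_T^n⦀ ≤ κ⁻¹MΘ⦀e_u^{n-1}⦀`; substituting this into the velocity inequality gives
the contraction `⦀e_u^n⦀ ≤ (Pr⁻¹NU + Raκ⁻¹MΘ)⦀e_u^{n-1}⦀ ≤ (1 - C₀)⦀e_u^{n-1}⦀`.
Iterating it gives geometric decay of `e_u`, which the temperature error inherits.
-/

open Filter Topology

theorem le_of_mul_sq_le {α : Type*} [Field α] [LinearOrder α] [IsStrictOrderedRing α]
    {a b c x : α} (ha : 0 < a) (hx : 0 ≤ x) (hc : 0 ≤ c)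
    (h : a * x ^ 2 ≤ b * x) (hbc : b ≤ a * c) : x ≤ c := by
  rcases hx.eq_or_lt with rfl | hx
  · exact hc
  have hax : a * x ≤ b := le_of_mul_le_mul_right (by linarith [sq x]) hx
  exact le_of_mul_le_mul_left (hax.trans hbc) ha

theorem oseen_error_recursion_general
    {V S : Type*} [NormedAddCommGroup V]
    [NormedAddCommGroup S]
    (eu : ℕ → V) (eT : ℕ → S)
    (N M U Θ Pr Ra κ C₀ : ℝ)
    (hM : 0 < M) (hΘ : 0 < Θ)
    (hPr : 0 < Pr) (hRa : 0 < Ra) (hκ : 0 < κ) (hC0 : 0 < C₀) (hC1 : C₀ < 1)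
    (hsmall : Pr⁻¹ * N * U + Ra * κ⁻¹ * M * Θ ≤ 1 - C₀)
    (hu : ∀ n, 1 ≤ n →
      Pr * ‖eu n‖ ^ 2 ≤ N * ‖eu (n - 1)‖ * U * ‖eu n‖ + Pr * Ra * ‖eT n‖ * ‖eu n‖)
    (hT : ∀ n, 1 ≤ n → κ * ‖eT n‖ ^ 2 ≤ M * ‖eu (n - 1)‖ * Θ * ‖eT n‖) :
    (∀ n, ‖eu n‖ ≤ (1 - C₀) ^ n * ‖eu 0‖) ∧
    (∀ n, 1 ≤ n → ‖eT n‖ ≤ κ⁻¹ * M * Θ * (1 - C₀) ^ (n - 1) * ‖eu 0‖) ∧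
    Filter.Tendsto (fun n => ‖eu n‖) Filter.atTop (nhds 0) ∧
    Filter.Tendsto (fun n => ‖eT n‖) Filter.atTop (nhds 0) := by
  have hq : 0 ≤ 1 - C₀ := by linarith
  have hT_le (n : ℕ) : ‖eT (n + 1)‖ ≤ κ⁻¹ * M * Θ * ‖eu n‖ := by
    have h := hT (n + 1) n.succ_pos
    rw [Nat.add_sub_cancel] at h
    exact le_of_mul_sq_le hκ (norm_nonneg _) (by positivity) h (le_of_eq (by field_simp))
  have hu_le (n : ℕ) : ‖eu (n + 1)‖ ≤ (1 - C₀) * ‖eu n‖ := by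
    have h := hu (n + 1) n.succ_pos
    rw [Nat.add_sub_cancel, ← add_mul] at h
    refine le_of_mul_sq_le hPr (norm_nonneg _) (by positivity) h ?_
    calc N * ‖eu n‖ * U + Pr * Ra * ‖eT (n + 1)‖
        ≤ N * ‖eu n‖ * U + Pr * Ra * (κ⁻¹ * M * Θ * ‖eu n‖) := by gcongr; exact hT_le n
      _ = Pr * ((Pr⁻¹ * N * U + Ra * κ⁻¹ * M * Θ) * ‖eu n‖) := by field_simp
      _ ≤ Pr * ((1 - C₀) * ‖eu n‖) := by gcongr
  have hu_geom (n : ℕ) : ‖eu n‖ ≤ (1 - C₀) ^ n * ‖eu 0‖ :=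
    le_geom (u := fun n => ‖eu n‖) hq n fun k _ => hu_le k
  have hu_lim : Tendsto (fun n => ‖eu n‖) atTop (𝓝 0) := by
    refine squeeze_zero (fun _ => norm_nonneg _) hu_geom ?_
    simpa using (tendsto_pow_atTop_nhds_zero_of_lt_one hq (by linarith)).mul_const ‖eu 0‖
  refine ⟨hu_geom, ?_, hu_lim, ?_⟩
  · rintro (_ | n) hn
    · omega
    calc ‖eT (n + 1)‖ ≤ κ⁻¹ * M * Θ * ‖eu n‖ := hT_le n
      _ ≤ κ⁻¹ * M * Θ * ((1 - C₀) ^ n * ‖eu 0‖) := by gcongr; exact hu_geom n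
      _ = _ := by simp only [Nat.add_sub_cancel]; ring
  · refine (tendsto_add_atTop_iff_nat 1).mp (squeeze_zero (fun _ => norm_nonneg _) hT_le ?_)
    simpa using hu_lim.const_mul (κ⁻¹ * M * Θ)

/-- Abstract form of the Oseen-iteration error recursion: from
`Pr⦀e_u^n⦀² ≤ N⦀e_u^{n−1}⦀U⦀e_u^n⦀ + Pr·Ra⦀e_T^n⦀⦀e_u^n⦀` and
`κ⦀e_T^n⦀² ≤ M⦀e_u^{n−1}⦀Θ⦀e_T^n⦀` with `Pr⁻¹NU + Raκ⁻¹MΘ ≤ 1 − C₀`, `0 < C₀ < 1`,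
one gets geometric decay of both error sequences, hence convergence to zero. -/
theorem oseen_error_recursion
    {V S : Type*} [NormedAddCommGroup V] [InnerProductSpace ℝ V]
    [NormedAddCommGroup S] [InnerProductSpace ℝ S]
    (eu : ℕ → V) (eT : ℕ → S)
    (N M U Θ Pr Ra κ C₀ : ℝ)
    (hN : 0 < N) (hM : 0 < M) (hU : 0 < U) (hΘ : 0 < Θ)
    (hPr : 0 < Pr) (hRa : 0 < Ra) (hκ : 0 < κ) (hC0 : 0 < C₀) (hC1 : C₀ < 1)
    (hsmall : Pr⁻¹ * N * U + Ra * κ⁻¹ * M * Θ ≤ 1 - C₀)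
    (hu : ∀ n, 1 ≤ n →
      Pr * ‖eu n‖ ^ 2 ≤ N * ‖eu (n - 1)‖ * U * ‖eu n‖ + Pr * Ra * ‖eT n‖ * ‖eu n‖)
    (hT : ∀ n, 1 ≤ n → κ * ‖eT n‖ ^ 2 ≤ M * ‖eu (n - 1)‖ * Θ * ‖eT n‖) :
    (∀ n, ‖eu n‖ ≤ (1 - C₀) ^ n * ‖eu 0‖) ∧
    (∀ n, 1 ≤ n → ‖eT n‖ ≤ κ⁻¹ * M * Θ * (1 - C₀) ^ (n - 1) * ‖eu 0‖) ∧
    Filter.Tendsto (fun n => ‖eu n‖) Filter.atTop (nhds 0) ∧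
    Filter.Tendsto (fun n => ‖eT n‖) Filter.atTop (nhds 0) :=
  oseen_error_recursion_general eu eT N M U Θ Pr Ra κ C₀ hM hΘ hPr hRa hκ hC0 hC1 hsmall hu hT
end
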